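/- Relative smoothness of KL(Ax, b): f(x) = Σᵢ [(Ax)ᵢ ln((Ax)ᵢ/bᵢ) − (Ax)ᵢ + bᵢ] is ‖A‖₁-smooth relative to the negative entropy φ(x) = Σⱼ (xⱼ ln xⱼ − xⱼ) on ℝⁿ_{++}, i.e., ‖A‖₁·φ − f is convex on ℝⁿ_{++}. -/

import Mathlib

/-!
Write `‖A‖₁ φ - f` as `∑ⱼ (‖A‖₁ - cⱼ) (xⱼ log xⱼ - xⱼ) + ∑ᵢ logSumGap Aᵢ x + (affine in x)`,
where `cⱼ = ∑ᵢ Aᵢⱼ ≤ ‖A‖₁` are the column sums. On the positive orthant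
`logSumGap w x = ∑ⱼ wⱼ xⱼ log (xⱼ / w ⬝ x)`, which is convex for `w ≥ 0` because
`(p, q) ↦ p log (p / q)` is jointly convex, being the perspective of `t ↦ t log t`.
-/

open Set Real Matrix

theorem ConvexOn.finset_sum {𝕜 E β ι : Type*} [Semiring 𝕜] [PartialOrder 𝕜] [AddCommMonoid E]
    [AddCommMonoid β] [PartialOrder β] [IsOrderedAddMonoid β] [SMul 𝕜 E] [Module 𝕜 β]
    {s : Set E} (hs : Convex 𝕜 s) (t : Finset ι) {f : ι → E → β}
    (hf : ∀ i ∈ t, ConvexOn 𝕜 s (f i)) : ConvexOn 𝕜 s fun x => ∑ i ∈ t, f i x := by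
  classical
  induction t using Finset.induction_on with
  | empty => simpa using convexOn_const 0 hs
  | insert i t hi ih =>
    simp only [Finset.sum_insert hi]
    exact (hf i (t.mem_insert_self i)).add (ih fun j hj => hf j (Finset.mem_insert_of_mem hj))

theorem ConvexOn.sum_apply_pi {𝕜 E β ι : Type*} [Semiring 𝕜] [PartialOrder 𝕜] [AddCommMonoid E]
    [AddCommMonoid β] [PartialOrder β] [IsOrderedAddMonoid β] [Module 𝕜 E] [Module 𝕜 β]
    [Fintype ι] {s : ι → Set E} {g : ι → E → β} (hg : ∀ i, ConvexOn 𝕜 (s i) (g i)) :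
    ConvexOn 𝕜 (univ.pi s) fun x => ∑ i, g i (x i) :=
  have hs : Convex 𝕜 (univ.pi s) := convex_pi fun i _ => (hg i).1
  ConvexOn.finset_sum hs _ fun i _ =>
    ((hg i).comp_linearMap (LinearMap.proj (R := 𝕜) (φ := fun _ : ι => E) i)).subset
      (fun _ hx => mem_univ_pi.1 hx i) hs

theorem ConvexOn.perspective {E : Type*} [AddCommGroup E] [Module ℝ E] {s : Set E} {g : E → ℝ}
    (hg : ConvexOn ℝ s g) :
    ConvexOn ℝ {p : E × ℝ | 0 < p.2 ∧ p.2⁻¹ • p.1 ∈ s} fun p => p.2 * g (p.2⁻¹ • p.1) := by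
  -- With `q = a x.2 + b y.2`, the weights `a x.2 / q`, `b y.2 / q` mix the points `p.2⁻¹ • p.1`
  -- into `q⁻¹ • (a • x.1 + b • y.1)`.
  have key : ∀ ⦃x y : E × ℝ⦄, 0 < x.2 → 0 < y.2 → ∀ ⦃a b : ℝ⦄, 0 ≤ a → 0 ≤ b → a + b = 1 →
      0 < a * x.2 + b * y.2 ∧ (a * x.2 + b * y.2)⁻¹ • (a • x.1 + b • y.1) =
        (a * x.2 / (a * x.2 + b * y.2)) • (x.2⁻¹ • x.1) +
          (b * y.2 / (a * x.2 + b * y.2)) • (y.2⁻¹ • y.1) := by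
    intro x y hx hy a b ha hb hab
    have hq : 0 < a * x.2 + b * y.2 := by
      rcases ha.eq_or_lt with rfl | ha
      · simp_all
      · positivity
    refine ⟨hq, ?_⟩
    simp only [smul_smul, smul_add]
    congr 2 <;> field_simp
  refine ⟨?_, ?_⟩
  · rintro x ⟨hx, hxs⟩ y ⟨hy, hys⟩ a b ha hb hab
    obtain ⟨hq, hmix⟩ := key hx hy ha hb hab
    refine ⟨hq, ?_⟩
    simp only [Prod.smul_fst, Prod.smul_snd, Prod.fst_add, Prod.snd_add, smul_eq_mul, hmix]
    exact hg.1 hxs hys (by positivity) (by positivity) (by field_simp)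
  · rintro x ⟨hx, hxs⟩ y ⟨hy, hys⟩ a b ha hb hab
    obtain ⟨hq, hmix⟩ := key hx hy ha hb hab
    simp only [Prod.smul_fst, Prod.smul_snd, Prod.fst_add, Prod.snd_add, smul_eq_mul, hmix]
    have hjensen := hg.2 hxs hys (by positivity : 0 ≤ a * x.2 / (a * x.2 + b * y.2))
      (by positivity : 0 ≤ b * y.2 / (a * x.2 + b * y.2)) (by field_simp)
    calc (a * x.2 + b * y.2) * g _
        ≤ (a * x.2 + b * y.2) * _ := mul_le_mul_of_nonneg_left hjensen hq.le
      _ = _ := by simp only [smul_eq_mul]; field_simp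

theorem convexOn_mul_log_div :
    ConvexOn ℝ (Ioi 0 ×ˢ Ioi 0) fun p : ℝ × ℝ => p.1 * log (p.1 / p.2) := by
  have hsub : Ioi (0 : ℝ) ×ˢ Ioi 0 ⊆ {p : ℝ × ℝ | 0 < p.2 ∧ p.2⁻¹ • p.1 ∈ Ici 0} :=
    fun p ⟨hp₁, hp₂⟩ => ⟨hp₂, mem_Ici.2 (smul_nonneg (inv_nonneg.2 (le_of_lt hp₂)) (le_of_lt hp₁))⟩
  refine (convexOn_mul_log.perspective.subset hsub ((convex_Ioi 0).prod (convex_Ioi 0))).congr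
    fun p ⟨_, hp₂⟩ => ?_
  simp only [smul_eq_mul]
  field_simp [ne_of_gt (mem_Ioi.1 hp₂)]

noncomputable def logSumGap {ι : Type*} [Fintype ι] (w x : ι → ℝ) : ℝ :=
  w ⬝ᵥ (fun j => x j * log (x j)) - (w ⬝ᵥ x) * log (w ⬝ᵥ x)

theorem convexOn_logSumGap {ι : Type*} [Fintype ι] {w : ι → ℝ} (hw : 0 ≤ w) :
    ConvexOn ℝ (univ.pi fun _ => Ioi 0) (logSumGap w) := by
  have hconv : Convex ℝ (univ.pi fun _ : ι => Ioi (0 : ℝ)) := convex_pi fun _ _ => convex_Ioi 0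
  rcases eq_or_ne w 0 with rfl | hw₀
  · exact (convexOn_const 0 hconv).congr fun x _ => by simp [logSumGap]
  have hdot : ∀ x ∈ univ.pi fun _ => Ioi 0, 0 < w ⬝ᵥ x := by
    intro x hx
    obtain ⟨j, hj⟩ := Function.ne_iff.1 hw₀
    exact Finset.sum_pos' (fun k _ => mul_nonneg (hw k) (mem_univ_pi.1 hx k).le)
      ⟨j, Finset.mem_univ j, mul_pos ((hw j).lt_of_ne' hj) (mem_univ_pi.1 hx j)⟩
  have hterm : ∀ j, ConvexOn ℝ (univ.pi fun _ => Ioi 0)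
      fun x : ι → ℝ => w j • (x j * log (x j / (w ⬝ᵥ x))) := fun j =>
    ((convexOn_mul_log_div.comp_linearMap
      ((LinearMap.proj j).prod (dotProductBilin ℝ ℝ w))).subset
        (fun x hx => ⟨mem_univ_pi.1 hx j, hdot x hx⟩) hconv).smul (hw j)
  refine (ConvexOn.finset_sum hconv Finset.univ fun j _ => hterm j).congr fun x hx => ?_
  have hgap : logSumGap w x = ∑ j, (w j * (x j * log (x j)) - w j * (x j * log (w ⬝ᵥ x))) := by
    simp only [logSumGap, dotProduct, Finset.sum_mul, mul_assoc, Finset.sum_sub_distrib]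
  rw [hgap]
  refine Finset.sum_congr rfl fun j _ => ?_
  rw [smul_eq_mul, log_div (mem_univ_pi.1 hx j).ne' (hdot x hx).ne']
  ring

theorem mul_log_div_eq {t b : ℝ} (hb : b ≠ 0) : t * log (t / b) = t * log t - t * log b := by
  rcases eq_or_ne t 0 with rfl | ht
  · simp
  · rw [log_div ht hb, mul_sub]

theorem mul_negEntropy_sub_kl_eq {ι κ : Type*} [Fintype ι] [Fintype κ] (A : Matrix ι κ ℝ)
    (L : ℝ) {b : ι → ℝ} (hb : ∀ i, b i ≠ 0) (x : κ → ℝ) :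
    L * ∑ j, (x j * log (x j) - x j) -
        ∑ i, ((A *ᵥ x) i * log ((A *ᵥ x) i / b i) - (A *ᵥ x) i + b i) =
      ∑ j, (L - ∑ i, A i j) * (x j * log (x j) - x j) +
        ∑ i, (logSumGap (A i) x + (A *ᵥ x) i * log (b i) - b i) := by
  have hcol : ∀ y : κ → ℝ, ∑ j, (∑ i, A i j) * y j = ∑ i, A i ⬝ᵥ y := fun y => by
    simp only [dotProduct, Finset.sum_mul]
    exact Finset.sum_comm
  have hsplit : ∀ i, A i ⬝ᵥ (fun j => x j * log (x j)) =
      A i ⬝ᵥ (fun j => x j * log (x j) - x j) + A i ⬝ᵥ x := fun i => by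
    rw [← dotProduct_add]; congr 1; ext j; simp
  simp only [logSumGap, mul_log_div_eq (hb _), sub_mul, Finset.sum_sub_distrib,
    Finset.sum_add_distrib, ← Finset.mul_sum, hcol, hsplit, mulVec]
  ring

theorem klAxb_rel_smooth_neg_entropy_general {m n : ℕ} [NeZero n]
    (A : Matrix (Fin m) (Fin n) ℝ) (hA : ∀ i j, 0 ≤ A i j)
    (b : Fin m → ℝ) (hb : ∀ i, 0 < b i) :
    ConvexOn ℝ {x : Fin n → ℝ | ∀ j, 0 < x j}
      (fun x =>
        (Finset.univ.sup' Finset.univ_nonempty (fun j => ∑ i, |A i j|)) *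
            (∑ j, (x j * Real.log (x j) - x j)) -
          ∑ i, (A.mulVec x i * Real.log (A.mulVec x i / b i) - A.mulVec x i + b i)) := by
  set L := Finset.univ.sup' Finset.univ_nonempty (fun j => ∑ i, |A i j|)
  have hL : ∀ j, 0 ≤ L - ∑ i, A i j := fun j => sub_nonneg.2 <| by
    simpa only [abs_of_nonneg (hA _ j)] using
      Finset.le_sup' (fun j => ∑ i, |A i j|) (Finset.mem_univ j)
  have horthant : {x : Fin n → ℝ | ∀ j, 0 < x j} = univ.pi fun _ => Ioi 0 := by ext; simp
  have hconv : Convex ℝ (univ.pi fun _ : Fin n => Ioi (0 : ℝ)) := convex_pi fun _ _ => convex_Ioi 0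
  have hentropy : ConvexOn ℝ (Ioi 0) fun t : ℝ => t * log t - t :=
    (convexOn_mul_log.subset Ioi_subset_Ici_self (convex_Ioi 0)).sub (concaveOn_id (convex_Ioi 0))
  refine ConvexOn.congr ?_ fun x _ => (mul_negEntropy_sub_kl_eq A L (fun i => (hb i).ne') x).symm
  rw [horthant]
  refine (ConvexOn.sum_apply_pi fun j => hentropy.smul (hL j)).add
    (ConvexOn.finset_sum hconv _ fun i _ => ?_)
  have hlinear := (log (b i) • dotProductBilin ℝ ℝ (A i)).convexOn hconv
  refine ((convexOn_logSumGap (hA i)).add hlinear).add_const (-b i) |>.congr fun x _ => ?_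
  simp [mulVec, mul_comm, sub_eq_add_neg]

theorem klAxb_rel_smooth_neg_entropy {m n : ℕ} [NeZero n]
    (A : Matrix (Fin m) (Fin n) ℝ) (hA : ∀ i j, 0 ≤ A i j)
    (hrows : ∀ i, ∃ j, A i j ≠ 0)
    (b : Fin m → ℝ) (hb : ∀ i, 0 < b i) :
    ConvexOn ℝ {x : Fin n → ℝ | ∀ j, 0 < x j}
      (fun x =>
        (Finset.univ.sup' Finset.univ_nonempty (fun j => ∑ i, |A i j|)) *
            (∑ j, (x j * Real.log (x j) - x j)) -
          ∑ i, (A.mulVec x i * Real.log (A.mulVec x i / b i) - A.mulVec x i + b i)) :=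
  klAxb_rel_smooth_neg_entropy_general A hA b hb
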